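/- arXiv:0903.1125 — 3 statements merged into one kernel-verified Lean document; each statement's English description precedes it below -/
import Mathlib

section
/- Let c and l be positive integers, let p : Fin c → ℝ be a probability vector, and let X₁, …, X_l be independent random variables each taking values in {1, …, c} with P(X_j = i) = pᵢ. Then the expected number of distinct values among X₁, …, X_l is at most c · (1 − (1 − 1/c)^l). -/
/-!
Label `i` is missed by all `l` independent draws with probability `(1 - p i) ^ l`, so by
linearity of expectation the expected number of distinct labels is `∑ i, (1 - (1 - p i) ^ l)`.
Since `x ↦ (1 - x) ^ l` is convex, Jensen's inequality at the uniform weights `1 / c` gives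
`c (1 - 1/c) ^ l ≤ ∑ i, (1 - p i) ^ l`.
-/

open MeasureTheory ProbabilityTheory Finset

section

variable {Ω ι α : Type*} [Fintype ι] {X : ι → Ω → α}

lemma card_image_eq_sum_indicator [Fintype α] [DecidableEq α] (ω : Ω) :
    ((univ.image fun j => X j ω).card : ℝ) = ∑ a, {ω | ∃ j, X j ω = a}.indicator 1 ω := by
  rw [sum_indicator_eq_sum_filter]
  simp

variable [MeasurableSpace Ω] {μ : Measure Ω} [MeasurableSpace α] [MeasurableSingletonClass α]

lemma measurableSet_exists_eq (hX : ∀ j, Measurable (X j)) (a : α) :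
    MeasurableSet {ω | ∃ j, X j ω = a} := by
  rw [Set.ofPred_exists]
  exact .iUnion fun j => hX j (measurableSet_singleton a)

lemma integral_card_image_eq_sum_measureReal [Fintype α] [DecidableEq α] [IsFiniteMeasure μ]
    (hX : ∀ j, Measurable (X j)) :
    ∫ ω, ((univ.image fun j => X j ω).card : ℝ) ∂μ = ∑ a, μ.real {ω | ∃ j, X j ω = a} := by
  simp_rw [card_image_eq_sum_indicator]
  rw [integral_finsetSum]
  · exact sum_congr rfl fun a _ => integral_indicator_one (measurableSet_exists_eq hX a)
  · exact fun a _ => (integrable_const (1 : ℝ)).indicator (measurableSet_exists_eq hX a)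

lemma ProbabilityTheory.iIndepFun.measureReal_exists_eq [IsProbabilityMeasure μ]
    (hindep : iIndepFun X μ) (hX : ∀ j, Measurable (X j)) (a : α) :
    μ.real {ω | ∃ j, X j ω = a} = 1 - ∏ j, (1 - μ.real {ω | X j ω = a}) := by
  have hmiss : μ.real (⋂ j, X j ⁻¹' {a}ᶜ) = ∏ j, (1 - μ.real {ω | X j ω = a}) := by
    rw [measureReal_def, hindep.meas_iInter fun j => ⟨{a}ᶜ, (measurableSet_singleton a).compl, rfl⟩,
      ENNReal.toReal_prod]
    refine prod_congr rfl fun j _ => ?_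
    rw [← measureReal_def, Set.preimage_compl,
      probReal_compl_eq_one_sub (hX j (measurableSet_singleton a))]
    rfl
  have hcompl : {ω | ∃ j, X j ω = a} = (⋂ j, X j ⁻¹' {a}ᶜ)ᶜ := by
    ext ω
    simp
  rw [hcompl, probReal_compl_eq_one_sub (.iInter fun j => hX j (measurableSet_singleton a).compl),
    hmiss]

end

lemma card_mul_one_sub_inv_pow_le_sum_one_sub_pow {ι : Type*} [Fintype ι] {p : ι → ℝ}
    (hp : ∀ i, p i ≤ 1) (hsum : ∑ i, p i = 1) (n : ℕ) :
    Fintype.card ι * (1 - 1 / Fintype.card ι : ℝ) ^ n ≤ ∑ i, (1 - p i) ^ n := by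
  have hcard : (Fintype.card ι : ℝ) ≠ 0 := by
    have : Nonempty ι := by
      by_contra h
      simp [not_nonempty_iff.mp h] at hsum
    positivity
  have hmean : ∑ i, 1 / (Fintype.card ι : ℝ) * (1 - p i) = 1 - 1 / Fintype.card ι := by
    rw [← mul_sum, sum_sub_distrib, hsum]
    simp [field]
  have hjensen := Real.pow_arith_mean_le_arith_mean_pow univ (fun _ => 1 / (Fintype.card ι : ℝ))
    (fun i => 1 - p i) (fun _ _ => by positivity) (by simp [field])
    (fun i _ => sub_nonneg.mpr (hp i)) n
  rw [hmean, ← mul_sum] at hjensen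
  calc _ ≤ (Fintype.card ι : ℝ) * (1 / Fintype.card ι * ∑ i, (1 - p i) ^ n) := by gcongr
    _ = ∑ i, (1 - p i) ^ n := by field_simp

theorem expected_distinct_values_le_general
    {Ω : Type*} [MeasurableSpace Ω] (μ : Measure Ω) [IsProbabilityMeasure μ]
    (c l : ℕ)
    (p : Fin c → ℝ) (hp0 : ∀ i, 0 ≤ p i) (hp1 : ∑ i, p i = 1)
    (X : Fin l → Ω → Fin c)
    (hmeas : ∀ j, Measurable (X j))
    (hindep : ProbabilityTheory.iIndepFun X μ)
    (hdist : ∀ j i, μ {ω | X j ω = i} = ENNReal.ofReal (p i)) :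
    ∫ ω, ((Finset.univ.image (fun j => X j ω)).card : ℝ) ∂μ
      ≤ c * (1 - (1 - 1 / (c : ℝ)) ^ l) := by
  have hlaw : ∀ j i, μ.real {ω | X j ω = i} = p i := fun j i => by
    rw [measureReal_def, hdist, ENNReal.toReal_ofReal (hp0 i)]
  have hp_le_one : ∀ i, p i ≤ 1 := fun i => hp1 ▸ single_le_sum (fun j _ => hp0 j) (mem_univ i)
  have hjensen := card_mul_one_sub_inv_pow_le_sum_one_sub_pow hp_le_one hp1 l
  rw [Fintype.card_fin] at hjensen
  calc ∫ ω, ((univ.image fun j => X j ω).card : ℝ) ∂μ = ∑ i, (1 - (1 - p i) ^ l) := by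
        simp only [integral_card_image_eq_sum_measureReal hmeas,
          hindep.measureReal_exists_eq hmeas, hlaw, prod_const, card_univ,
          Fintype.card_fin]
    _ = c - ∑ i, (1 - p i) ^ l := by simp [sum_sub_distrib]
    _ ≤ c * (1 - (1 - 1 / (c : ℝ)) ^ l) := by linarith

/-- Contraction-rate lemma in finite form: the expected number of
distinct values among `l` i.i.d.-style independent draws from `c` classes is at
most `c·(1 − (1 − 1/c)^l)`. -/
theorem expected_distinct_values_le
    {Ω : Type*} [MeasurableSpace Ω] (μ : Measure Ω) [IsProbabilityMeasure μ]
    (c l : ℕ) (hc : 0 < c) (hl : 0 < l)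
    (p : Fin c → ℝ) (hp0 : ∀ i, 0 ≤ p i) (hp1 : ∑ i, p i = 1)
    (X : Fin l → Ω → Fin c)
    (hmeas : ∀ j, Measurable (X j))
    (hindep : ProbabilityTheory.iIndepFun X μ)
    (hdist : ∀ j i, μ {ω | X j ω = i} = ENNReal.ofReal (p i)) :
    ∫ ω, ((Finset.univ.image (fun j => X j ω)).card : ℝ) ∂μ
      ≤ c * (1 - (1 - 1 / (c : ℝ)) ^ l) :=
  expected_distinct_values_le_general μ c l p hp0 hp1 X hmeas hindep hdist
end

section
/- Let α > 0, β ∈ (0,1) be real numbers, let r be a positive integer with r·α·β = 1, and set q = Q(α(1−β)) = (1 − e^{−α(1−β)})/(α(1−β)). Then (1/(1−β)) · ∑_{i=0}^{r−1} (1 − i/r) · ∏_{k=0}^{i−1} Q(α(1−β)/(1 − kαβ)) ≤ (1 − q − (q/r)(1 − q^r)) / ((1−β)(1−q)²), where Q(x) = (1 − e^{−x})/x for x > 0. -/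
/-!
`Q x = (1 - e^{-x}) / x` is the slope through the origin of the concave function
`1 - e^{-x}`, so it is nonincreasing on `(0, ∞)` and takes values in `[0, 1)`. Since
`kαβ = k/r < 1` for `k < r`, every argument `α(1-β)/(1 - kαβ)` is at least `α(1-β)`, so each
factor of the `i`-th product is at most `q` and the product at most `q^i`. The bound is then
the closed form of `∑_{i<r} (1 - i/r) q^i`.
-/

open Real Set Finset

lemma concaveOn_one_sub_exp_neg : ConcaveOn ℝ univ fun x : ℝ => 1 - exp (-x) := by
  have h : ConvexOn ℝ univ fun x : ℝ => exp (-x) := by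
    simpa [Function.comp_def] using
      convexOn_exp.comp_linearMap (-LinearMap.id : ℝ →ₗ[ℝ] ℝ)
  exact (concaveOn_const 1 convex_univ).sub h

lemma antitoneOn_one_sub_exp_neg_div : AntitoneOn (fun x : ℝ => (1 - exp (-x)) / x) (Ioi 0) := by
  have h := concaveOn_one_sub_exp_neg.antitoneOn_slope_gt (mem_univ 0)
  have hslope : slope (fun x : ℝ => 1 - exp (-x)) 0 = fun x => (1 - exp (-x)) / x := by
    ext x; simp [slope_def_field]
  simpa [hslope, Ioi_def] using h

lemma one_sub_exp_neg_div_nonneg (x : ℝ) : 0 ≤ (1 - exp (-x)) / x := by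
  rcases le_total 0 x with hx | hx
  · exact div_nonneg (by simpa using exp_le_one_iff.mpr (neg_nonpos.mpr hx)) hx
  · exact div_nonneg_of_nonpos (by simpa using one_le_exp_iff.mpr (neg_nonneg.mpr hx)) hx

lemma one_sub_exp_neg_div_lt_one {x : ℝ} (hx : 0 < x) : (1 - exp (-x)) / x < 1 := by
  rw [div_lt_one hx]
  linarith [add_one_lt_exp (neg_ne_zero.mpr hx.ne')]

lemma one_sub_exp_neg_div_div_le {x c : ℝ} (hx : 0 < x) (hc : 0 < c) (hc1 : c ≤ 1) :
    (1 - exp (-(x / c))) / (x / c) ≤ (1 - exp (-x)) / x :=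
  antitoneOn_one_sub_exp_neg_div hx (div_pos hx hc) (le_div_self hx.le hc hc1)

lemma sum_range_sub_mul_pow {R : Type*} [CommRing R] (q : R) (n : ℕ) :
    (1 - q) ^ 2 * ∑ i ∈ range n, ((n : R) - i) * q ^ i = n * (1 - q) - q * (1 - q ^ n) := by
  induction n with
  | zero => simp
  | succ n ih =>
    have hsplit : ∑ i ∈ range (n + 1), ((↑(n + 1) : R) - i) * q ^ i
        = ∑ i ∈ range (n + 1), q ^ i + ∑ i ∈ range n, ((n : R) - i) * q ^ i := by
      have hlast : ∑ i ∈ range n, ((n : R) - i) * q ^ i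
          = ∑ i ∈ range (n + 1), ((n : R) - i) * q ^ i := by simp [sum_range_succ]
      rw [hlast, ← sum_add_distrib]
      exact sum_congr rfl fun i _ => by push_cast; ring
    rw [hsplit]
    push_cast
    linear_combination ih - (1 - q) * geom_sum_mul q (n + 1)

lemma sum_range_one_sub_div_mul_pow {K : Type*} [Field K] [CharZero K] {q : K} (hq : q ≠ 1)
    {n : ℕ} (hn : n ≠ 0) :
    ∑ i ∈ range n, (1 - (i : K) / n) * q ^ i = (1 - q - q / n * (1 - q ^ n)) / (1 - q) ^ 2 := by
  have hq' : (1 - q) ^ 2 ≠ 0 := pow_ne_zero 2 (sub_ne_zero.mpr hq.symm)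
  have hn' : (n : K) ≠ 0 := Nat.cast_ne_zero.mpr hn
  have hsum : ∑ i ∈ range n, (1 - (i : K) / n) * q ^ i
      = (n : K)⁻¹ * ∑ i ∈ range n, ((n : K) - i) * q ^ i := by
    rw [mul_sum]
    exact sum_congr rfl fun i _ => by field_simp
  rw [eq_div_iff hq', hsum, mul_comm, ← mul_assoc, mul_comm _ (n : K)⁻¹, mul_assoc,
    sum_range_sub_mul_pow]
  field_simp

/-- Label-count bound for the representatives algorithm:
with `rαβ = 1` and `q = Q(α(1−β))`,
`(1/(1−β)) ∑_{i=0}^{r−1} (1 − i/r) ∏_{k=0}^{i−1} Q(α(1−β)/(1 − kαβ))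
  ≤ (1 − q − (q/r)(1 − q^r)) / ((1−β)(1−q)²)`. -/
theorem representatives_label_bound
    (Q : ℝ → ℝ) (hQ : ∀ x : ℝ, 0 < x → Q x = (1 - Real.exp (-x)) / x)
    (α β : ℝ) (hα : 0 < α) (hβ : β ∈ Set.Ioo (0 : ℝ) 1)
    (r : ℕ) (hr : 0 < r) (hrab : (r : ℝ) * α * β = 1)
    (q : ℝ) (hq : q = Q (α * (1 - β))) :
    (1 / (1 - β)) *
        ∑ i ∈ Finset.range r, (1 - (i : ℝ) / r) *
          ∏ k ∈ Finset.range i, Q (α * (1 - β) / (1 - (k : ℝ) * α * β))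
      ≤ (1 - q - (q / r) * (1 - q ^ r)) / ((1 - β) * (1 - q) ^ 2) := by
  have hβ1 : 0 < 1 - β := sub_pos.mpr hβ.2
  have hx : 0 < α * (1 - β) := mul_pos hα hβ1
  have hr' : (0 : ℝ) < r := Nat.cast_pos.mpr hr
  have hq1 : q < 1 := hq ▸ (hQ _ hx).symm ▸ one_sub_exp_neg_div_lt_one hx
  have hfactor : ∀ k < r, 0 ≤ Q (α * (1 - β) / (1 - (k : ℝ) * α * β)) ∧
      Q (α * (1 - β) / (1 - (k : ℝ) * α * β)) ≤ q := by
    intro k hk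
    have hk_div : (k : ℝ) * α * β = k / r := by field_simp; linear_combination (k : ℝ) * hrab
    have hk_nonneg : (0 : ℝ) ≤ k / r := by positivity
    have hk_lt : (k : ℝ) / r < 1 := (div_lt_one hr').mpr (Nat.cast_lt.mpr hk)
    have hpos : 0 < 1 - (k : ℝ) * α * β := by linarith
    rw [hQ _ (div_pos hx hpos), hq, hQ _ hx]
    exact ⟨one_sub_exp_neg_div_nonneg _, one_sub_exp_neg_div_div_le hx hpos (by linarith)⟩
  have hprod : ∀ i ∈ range r,
      ∏ k ∈ range i, Q (α * (1 - β) / (1 - (k : ℝ) * α * β)) ≤ q ^ i := by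
    intro i hi
    have hkr : ∀ k ∈ range i, k < r := fun k hk => (mem_range.mp hk).trans (mem_range.mp hi)
    calc _ ≤ ∏ _k ∈ range i, q :=
          prod_le_prod (fun k hk => (hfactor k (hkr k hk)).1)
            (fun k hk => (hfactor k (hkr k hk)).2)
      _ = q ^ i := by rw [prod_const, card_range]
  calc _ ≤ (1 / (1 - β)) * ∑ i ∈ range r, (1 - (i : ℝ) / r) * q ^ i := by
        gcongr with i hi
        · rw [sub_nonneg, div_le_one hr']
          exact_mod_cast (mem_range.mp hi).le
        · exact hprod i hi
    _ = _ := by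
      rw [sum_range_one_sub_div_mul_pow hq1.ne hr.ne']
      field_simp
end

section
/- The function α ↦ 1 − (1 − e^{−α}) / (α − e^{−α} + 1) tends to 1/2 as α → 0⁺. -/
/-! For `α > 0` the expression equals `1 / (1 + (1 - e^{-α}) / α)`, and `(1 - e^{-α}) / α → 1`
because `x ↦ e^{-x}` has derivative `-1` at `0`. -/

open Filter Real Set Topology

lemma tendsto_one_sub_exp_neg_div_nhdsNE :
    Tendsto (fun x : ℝ => (1 - exp (-x)) / x) (𝓝[≠] 0) (𝓝 1) := by
  have hderiv : HasDerivAt (fun x : ℝ => exp (-x)) (-1) 0 := by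
    simpa using (hasDerivAt_neg (0 : ℝ)).exp
  have hslope := hderiv.tendsto_slope_zero.neg
  simp only [zero_add, neg_zero, exp_zero, smul_eq_mul, neg_neg] at hslope
  refine hslope.congr fun x => ?_
  rw [← mul_neg, neg_sub, inv_mul_eq_div]

lemma one_sub_div_eq_inv_one_add {α : ℝ} (hα : 0 < α) :
    1 - (1 - exp (-α)) / (α - exp (-α) + 1) = (1 + (1 - exp (-α)) / α)⁻¹ := by
  have hexp : exp (-α) < 1 := exp_lt_one_iff.mpr (neg_lt_zero.mpr hα)
  have hden : α - exp (-α) + 1 ≠ 0 := by linarith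
  rw [one_add_div hα.ne', inv_div, one_sub_div hden]
  congr 1 <;> ring

/-- `1 − (1 − e^{−α})/(α − e^{−α} + 1) → 1/2` as `α → 0⁺`. -/
theorem c4_efficiency_asymptotic :
    Filter.Tendsto
      (fun α : ℝ => 1 - (1 - Real.exp (-α)) / (α - Real.exp (-α) + 1))
      (nhdsWithin 0 (Set.Ioi 0)) (nhds (1 / 2)) := by
  have hlim : Tendsto (fun α : ℝ => (1 + (1 - exp (-α)) / α)⁻¹) (𝓝[>] 0) (𝓝 (1 + 1)⁻¹) :=
    ((tendsto_const_nhds.add tendsto_one_sub_exp_neg_div_nhdsNE).inv₀ (by norm_num)).mono_left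
      (nhdsGT_le_nhdsNE 0)
  rw [one_div, ← one_add_one_eq_two]
  exact hlim.congr' (eventually_nhdsWithin_of_forall fun α hα =>
    (one_sub_div_eq_inv_one_add hα).symm)
end
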